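/- For every cardinal κ: κ < add(𝔛, 𝔇) if and only if for every κ-sequence ⟨(g_α, F_α) : α < κ⟩ such that each g_α ∈ ℕ^ℕ and the restriction F_α∥{n : 0 < g_α(n)} is large (all members infinite) and linearly quasiordered by ⊆*, there exists h ∈ ℕ^ℕ such that for each α the restriction F_α∥{n : g_α(n) ≤ h(n)} is large. -/

import Mathlib

open Cardinal Set

/-- `A` is almost contained in `B`: `A \ B` is finite. -/
def ASub (A B : Set ℕ) : Prop := (A \ B).Finite

/-- A family is linearly quasiordered by `⊆*`. -/
def LinQO (F : Set (Set ℕ)) : Prop := ∀ A ∈ F, ∀ B ∈ F, ASub A B ∨ ASub B A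

/-- A centered family of infinite subsets of `ℕ`. -/
def Centered (F : Set (Set ℕ)) : Prop :=
  (∀ A ∈ F, A.Infinite) ∧
  ∀ G : Finset (Set ℕ), ↑G ⊆ F → G.Nonempty → (⋂ A ∈ G, A).Infinite

/-- `A` is a pseudo-intersection of `F`. -/
def PseudoInt (F : Set (Set ℕ)) (A : Set ℕ) : Prop :=
  A.Infinite ∧ ∀ B ∈ F, ASub A B

/-- The pseudo-intersection number 𝔭. -/
noncomputable def pNum : Cardinal :=
  sInf {c | ∃ F : Set (Set ℕ), Centered F ∧ (¬∃ A, PseudoInt F A) ∧ c = #F}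

/-- The tower number 𝔱. -/
noncomputable def tNum : Cardinal :=
  sInf {c | ∃ F : Set (Set ℕ), (∀ A ∈ F, A.Infinite) ∧ LinQO F ∧
    (¬∃ A, PseudoInt F A) ∧ c = #F}

/-- Eventual dominance `f ≤* g`. -/
def LeStar (f g : ℕ → ℕ) : Prop := {n | g n < f n}.Finite

def UnboundedFam (B : Set (ℕ → ℕ)) : Prop := ¬∃ g, ∀ f ∈ B, LeStar f g

def DominatingFam (D : Set (ℕ → ℕ)) : Prop := ∀ f, ∃ g ∈ D, LeStar f g

/-- The unbounding number 𝔟. -/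
noncomputable def bNum : Cardinal := sInf {c | ∃ B, UnboundedFam B ∧ c = #B}

/-- The dominating number 𝔡. -/
noncomputable def dNum : Cardinal := sInf {c | ∃ D, DominatingFam D ∧ c = #D}

def SplittingFam (S : Set (Set ℕ)) : Prop :=
  ∀ A : Set ℕ, A.Infinite → ∃ s ∈ S, (A ∩ s).Infinite ∧ (A \ s).Infinite

/-- The splitting number 𝔰. -/
noncomputable def sNum : Cardinal := sInf {c | ∃ S, SplittingFam S ∧ c = #S}

/-- `g` avoids middles in `X` with respect to `⟨R,S⟩`. -/
def AvoidsMiddles (R S : ℕ → ℕ → Prop) (g : ℕ → ℕ) (X : Set (ℕ → ℕ)) : Prop :=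
  (∀ f ∈ X, {n | R (f n) (g n)}.Infinite) ∧
  ∀ f ∈ X, ∀ h ∈ X,
    {n | R (f n) (g n) ∧ S (g n) (h n)}.Finite ∨
    {n | R (h n) (g n) ∧ S (g n) (f n)}.Finite

/-- The excluded middle property with respect to `⟨R,S⟩`. -/
def EMP (R S : ℕ → ℕ → Prop) (X : Set (ℕ → ℕ)) : Prop := ∃ g, AvoidsMiddles R S g X

/-- The cardinal 𝔵_{R,S}. -/
noncomputable def xNum (R S : ℕ → ℕ → Prop) : Cardinal :=
  sInf {c | ∃ X : Set (ℕ → ℕ), ¬ EMP R S X ∧ c = #X}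

/-- The class 𝔅 of bounded sets. -/
def ClB (Y : Set (ℕ → ℕ)) : Prop := ∃ g, ∀ f ∈ Y, LeStar f g

/-- The class 𝔛. -/
def ClX (Y : Set (ℕ → ℕ)) : Prop := EMP (· < ·) (· ≤ ·) Y

/-- `Y` is finitely dominating: `maxfin Y` is dominating. -/
def FinDominating (Y : Set (ℕ → ℕ)) : Prop :=
  ∀ f : ℕ → ℕ, ∃ F : Finset (ℕ → ℕ), ↑F ⊆ Y ∧ LeStar f (fun n => F.sup (fun h => h n))

/-- The class 𝔇fin of non finitely-dominating sets. -/
def ClDfin (Y : Set (ℕ → ℕ)) : Prop := ¬ FinDominating Y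

/-- The class 𝔇 of non-dominating sets. -/
def ClD (Y : Set (ℕ → ℕ)) : Prop := ¬ DominatingFam Y

/-- The additivity number add(I, J). -/
noncomputable def addNum (I J : Set (ℕ → ℕ) → Prop) : Cardinal :=
  sInf {c | ∃ Fam : Set (Set (ℕ → ℕ)), (∀ Y ∈ Fam, I Y) ∧ ¬ J (⋃₀ Fam) ∧ c = #Fam}

/-- The Boolean subalgebra of `P(ℕ)` generated by `F`. -/
def genBA (F : Set (Set ℕ)) : Set (Set ℕ) :=
  ⋂₀ {C | F ⊆ C ∧ Set.univ ∈ C ∧ (∀ A ∈ C, Aᶜ ∈ C) ∧ ∀ A ∈ C, ∀ B ∈ C, A ∩ B ∈ C}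

/-- A nonprincipal ultrafilter (every member is infinite). -/
def NonPrincipal (U : Ultrafilter ℕ) : Prop := ∀ S ∈ U, Set.Infinite S

/-- The cofinality of the reduced product `ℕ^ℕ/U`. -/
noncomputable def cofRP (U : Ultrafilter ℕ) : Cardinal :=
  sInf {c | ∃ C : Set (ℕ → ℕ), (∀ f : ℕ → ℕ, ∃ g ∈ C, {n | f n ≤ g n} ∈ U) ∧ c = #C}

/-! For a pair `(g, F)` as in the statement, let `d_B k` be the maximum of `g` up to the first
point of `B ∩ {g > 0}` at or after `k`. Since `F` restricted to `{g > 0}` is a `⊆*`-chain, the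
set `{d_B : B ∈ F}` lies in `𝔛`, witnessed by `k ↦ max_{m ≤ k} g m + 1`. If moreover
`B ∩ {g > 0} ∩ {g ≤ f̄}` is finite, where `f̄ k = max_{m ≤ k} f m`, then `d_B` dominates `f`.
So when fewer than `add(𝔛, 𝔇)` pairs are given, these sets do not cover a dominating family,
and a suitable `f̄` serves as `h`.

Conversely, a witness `w` of `Y ∈ 𝔛` turns `Y` into the family `{{n | f n < w n} : f ∈ Y}` of
subsets of `{w > 0}`, a `⊆*`-chain by the excluded middle property; an `h` as in the statement
is then dominated by no member of `Y`. -/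

noncomputable def nextIn (S : Set ℕ) (k : ℕ) : ℕ := sInf {m | m ∈ S ∧ k ≤ m}

section nextIn

variable {S : Set ℕ} {k m : ℕ}

lemma nextIn_spec (hS : S.Infinite) (k : ℕ) : nextIn S k ∈ S ∧ k ≤ nextIn S k := by
  obtain ⟨b, hb, hkb⟩ := hS.exists_gt k
  exact Nat.sInf_mem (s := {m | m ∈ S ∧ k ≤ m}) ⟨b, hb, hkb.le⟩

lemma nextIn_le (hm : m ∈ S) (hkm : k ≤ m) : nextIn S k ≤ m :=
  Nat.sInf_le ⟨hm, hkm⟩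

lemma nextIn_eq_self (hk : k ∈ S) : nextIn S k = k :=
  le_antisymm (nextIn_le hk le_rfl) (Nat.sInf_mem (s := {m | m ∈ S ∧ k ≤ m}) ⟨k, hk, le_rfl⟩).2

end nextIn

def runningMax (g : ℕ → ℕ) (n : ℕ) : ℕ := (Finset.range (n + 1)).sup g

lemma runningMax_mono (g : ℕ → ℕ) : Monotone (runningMax g) := fun _ _ h =>
  Finset.sup_mono (Finset.range_subset_range.2 (by omega))

lemma le_runningMax (g : ℕ → ℕ) {k n : ℕ} (h : k ≤ n) : g k ≤ runningMax g n :=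
  Finset.le_sup (Finset.mem_range.2 (by omega))

noncomputable def supToNext (g : ℕ → ℕ) (P : Set ℕ) (k : ℕ) : ℕ := runningMax g (nextIn P k)

lemma leStar_refl (f : ℕ → ℕ) : LeStar f f := by
  simp [LeStar]

lemma clX_singleton (f : ℕ → ℕ) : ClX {f} := by
  refine ⟨fun n => f n + 1, ?_, ?_⟩ <;> simp [infinite_univ]

lemma clD_empty : ClD ∅ := fun hdom => by simpa using hdom id

lemma exists_clX_family_not_clD_sUnion :
    ∃ Fam : Set (Set (ℕ → ℕ)), (∀ Y ∈ Fam, ClX Y) ∧ ¬ ClD (⋃₀ Fam) := by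
  refine ⟨range fun f => {f}, forall_mem_range.2 clX_singleton, fun hnd => hnd fun f => ?_⟩
  exact ⟨f, by simp, leStar_refl f⟩

lemma finite_middle_supToNext_of_aSub (g : ℕ → ℕ) {P Q : Set ℕ} (hP : P.Infinite)
    (hPQ : ASub P Q) :
    {k | supToNext g P k < runningMax g k + 1 ∧ runningMax g k + 1 ≤ supToNext g Q k}.Finite := by
  obtain ⟨N, hN⟩ := hPQ.bddAbove
  refine (finite_Iic N).subset fun k ⟨hPk, hQk⟩ => ?_
  obtain ⟨hmP, hkm⟩ := nextIn_spec hP k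
  have hmQ : nextIn P k ∉ Q := fun hmQ => by
    have := runningMax_mono g (nextIn_le hmQ hkm)
    simp only [supToNext] at hPk hQk
    omega
  exact hkm.trans (hN ⟨hmP, hmQ⟩)

lemma clX_image_supToNext (g : ℕ → ℕ) {𝒜 : Set (Set ℕ)} (hinf : ∀ P ∈ 𝒜, P.Infinite)
    (hlin : LinQO 𝒜) : ClX (supToNext g '' 𝒜) := by
  refine ⟨fun n => runningMax g n + 1, ?_, ?_⟩
  · rintro _ ⟨P, hP, rfl⟩
    refine (hinf P hP).mono fun k hk => ?_
    simp [supToNext, nextIn_eq_self hk]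
  · rintro _ ⟨P, hP, rfl⟩ _ ⟨Q, hQ, rfl⟩
    exact (hlin P hP Q hQ).imp (finite_middle_supToNext_of_aSub g (hinf P hP))
      (finite_middle_supToNext_of_aSub g (hinf Q hQ))

lemma leStar_supToNext_of_finite {f g : ℕ → ℕ} {P : Set ℕ} (hP : P.Infinite)
    (hfin : (P ∩ {n | g n ≤ runningMax f n}).Finite) : LeStar f (supToNext g P) := by
  obtain ⟨N, hN⟩ := hfin.bddAbove
  refine (finite_Iic N).subset fun k hk => ?_
  by_contra! hkN
  obtain ⟨hmP, hkm⟩ := nextIn_spec hP k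
  have hgm : runningMax f (nextIn P k) < g (nextIn P k) := by
    by_contra! hle
    exact hkN (hkm.trans (hN ⟨hmP, hle⟩))
  have hfk := le_runningMax f hkm
  have hgm' := le_runningMax g (le_refl (nextIn P k))
  change runningMax g (nextIn P k) < f k at hk
  omega

section addNum

variable {I J : Set (ℕ → ℕ) → Prop}

lemma addNum_le_mk {ι : Type} (Y : ι → Set (ℕ → ℕ)) (hI : ∀ i, I (Y i))
    (hJ : ¬ J (⋃ i, Y i)) : addNum I J ≤ #ι := by
  refine (csInf_le' ?_).trans (mk_range_le (f := Y))
  exact ⟨range Y, forall_mem_range.2 hI, by rwa [sUnion_range], rfl⟩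

lemma mk_lt_addNum {ι : Type} (hJ : J ∅)
    (hne : ∃ Fam : Set (Set (ℕ → ℕ)), (∀ Y ∈ Fam, I Y) ∧ ¬ J (⋃₀ Fam))
    (h : ∀ Y : ι → Set (ℕ → ℕ), (∀ i, I (Y i)) → J (⋃ i, Y i)) : #ι < addNum I J := by
  obtain ⟨Fam₀, hI₀, hJ₀⟩ := hne
  obtain ⟨Fam, hI, hJFam, hc⟩ := csInf_mem (⟨_, Fam₀, hI₀, hJ₀, rfl⟩ :
    {c | ∃ Fam : Set (Set (ℕ → ℕ)), (∀ Y ∈ Fam, I Y) ∧ ¬ J (⋃₀ Fam) ∧ c = #Fam}.Nonempty)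
  rw [addNum, hc]
  by_contra! hle
  obtain ⟨Y₀, hY₀⟩ : Fam.Nonempty :=
    nonempty_iff_ne_empty.2 fun hempty => hJFam (by rwa [hempty, sUnion_empty])
  obtain ⟨σ, hσ⟩ := Function.exists_surjective_iff.2 ⟨⟨fun _ => ⟨Y₀, hY₀⟩⟩, hle⟩
  refine hJFam ?_
  rw [sUnion_eq_iUnion, ← hσ.iUnion_comp]
  exact h _ fun i => hI _ (σ i).2

end addNum

lemma exists_escape_of_mk_lt_addNum {ι : Type} (hι : #ι < addNum ClX ClD) (g : ι → ℕ → ℕ)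
    (𝒜 : ι → Set (Set ℕ)) (hinf : ∀ i, ∀ P ∈ 𝒜 i, P.Infinite) (hlin : ∀ i, LinQO (𝒜 i)) :
    ∃ h : ℕ → ℕ, ∀ i, ∀ P ∈ 𝒜 i, (P ∩ {n | g i n ≤ h n}).Infinite := by
  by_contra! hno
  refine hι.not_ge (addNum_le_mk (fun i => supToNext (g i) '' 𝒜 i)
    (fun i => clX_image_supToNext (g i) (hinf i) (hlin i)) fun hnd => hnd fun f => ?_)
  obtain ⟨i, P, hP, hfin⟩ := hno (runningMax f)
  exact ⟨_, mem_iUnion.2 ⟨i, P, hP, rfl⟩, leStar_supToNext_of_finite (hinf i P hP) hfin⟩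

lemma linQO_image_lt (w : ℕ → ℕ) {Y : Set (ℕ → ℕ)} (hw : AvoidsMiddles (· < ·) (· ≤ ·) w Y) :
    LinQO ((fun f => {n | f n < w n}) '' Y) := by
  have hdiff : ∀ f h : ℕ → ℕ,
      {n | f n < w n} \ {n | h n < w n} = {n | f n < w n ∧ w n ≤ h n} := by
    intro f h
    ext n
    simp
  rintro _ ⟨f, hf, rfl⟩ _ ⟨h, hh, rfl⟩
  simpa only [ASub, hdiff] using hw.2 f hf h hh

def HasEscape (ι : Type) : Prop :=
  ∀ (g : ι → ℕ → ℕ) (F : ι → Set (Set ℕ)),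
    (∀ i, (∀ B ∈ F i, (B ∩ {n | 0 < g i n}).Infinite) ∧
      LinQO ((· ∩ {n | 0 < g i n}) '' F i)) →
    ∃ h : ℕ → ℕ, ∀ i, ∀ B ∈ F i, (B ∩ {n | g i n ≤ h n}).Infinite

lemma clD_iUnion_of_hasEscape {ι : Type} (hesc : HasEscape ι) (Y : ι → Set (ℕ → ℕ))
    (hY : ∀ i, ClX (Y i)) : ClD (⋃ i, Y i) := by
  choose w hw using hY
  have hpos : ∀ i (f : ℕ → ℕ), {n | f n < w i n} ∩ {n | 0 < w i n} = {n | f n < w i n} :=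
    fun i f => inter_eq_left.2 fun n hn => Nat.zero_lt_of_lt hn
  obtain ⟨h, hh⟩ := hesc w (fun i => (fun f => {n | f n < w i n}) '' Y i) fun i => by
    refine ⟨forall_mem_image.2 fun f hf => by rw [hpos]; exact (hw i).1 f hf, ?_⟩
    simp only [image_image, hpos]
    exact linQO_image_lt _ (hw i)
  intro hdom
  obtain ⟨u, hu, hhu⟩ := hdom h
  obtain ⟨i, hui⟩ := mem_iUnion.1 hu
  exact hh i _ ⟨u, hui, rfl⟩ (hhu.subset fun n ⟨hlt, hle⟩ => Nat.lt_of_lt_of_le hlt hle)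

lemma mk_lt_addNum_iff_hasEscape (ι : Type) : #ι < addNum ClX ClD ↔ HasEscape ι := by
  refine ⟨fun hι g F hF => ?_, fun hesc =>
    mk_lt_addNum clD_empty exists_clX_family_not_clD_sUnion (clD_iUnion_of_hasEscape hesc)⟩
  obtain ⟨h, hh⟩ := exists_escape_of_mk_lt_addNum hι g (fun i => (· ∩ {n | 0 < g i n}) '' F i)
    (fun i => forall_mem_image.2 (hF i).1) fun i => (hF i).2
  refine ⟨h, fun i B hB => (hh i _ ⟨B, hB, rfl⟩).mono ?_⟩
  exact inter_subset_inter_left _ inter_subset_left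

theorem stmt16 (κ : Cardinal) :
    κ < addNum ClX ClD ↔
    ∀ (ι : Type) (_ : #ι = κ) (g : ι → ℕ → ℕ) (F : ι → Set (Set ℕ)),
      (∀ i, (∀ B ∈ F i, (B ∩ {n | 0 < g i n}).Infinite) ∧
        LinQO ((· ∩ {n | 0 < g i n}) '' F i)) →
      ∃ h : ℕ → ℕ, ∀ i, ∀ B ∈ F i, (B ∩ {n | g i n ≤ h n}).Infinite := by
  refine ⟨fun hκ ι hι => (mk_lt_addNum_iff_hasEscape ι).1 (hι ▸ hκ), fun hesc => ?_⟩
  rw [← mk_out κ]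
  exact (mk_lt_addNum_iff_hasEscape _).2 (hesc _ (mk_out κ))
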